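/- arXiv:1701.04074 — 3 statements merged into one kernel-verified Lean document; each statement's English description precedes it below -/
import Mathlib

section
/- The real Jacobian determinant of the Cayley transform Φ(z', z_n) = (z'/(1+z_n), i(1-z_n)/(1+z_n)), viewed as a map from R^{2n} to R^{2n}, equals 4/|1+ξ_n|^{2(n+1)} at each point ξ of the open unit ball B^n. -/
open MeasureTheory Real Complex

noncomputable section

/-- `ℂ^n` split as `(z', z_n)` with `z' ∈ ℂ^{n-1}` (here `m = n - 1`). -/
abbrev Cn (m : ℕ) := (Fin m → ℂ) × ℂ

/-- `|z'|² = ∑ |z_j|²` for `z' ∈ ℂ^{n-1}`. -/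
def nsq1 {m : ℕ} (z' : Fin m → ℂ) : ℝ := ∑ j, ‖z' j‖ ^ 2

/-- `⟨z', w'⟩ = ∑_{j<n} z_j conj w_j`. -/
def herm1 {m : ℕ} (z' w' : Fin m → ℂ) : ℂ := ∑ j, z' j * (starRingEnd ℂ) (w' j)

/-- Full Hermitian pairing `⟨z, w⟩` on `ℂ^n`. -/
def hermP {m : ℕ} (ξ η : Cn m) : ℂ := herm1 ξ.1 η.1 + ξ.2 * (starRingEnd ℂ) η.2

/-- `|z|²` on `ℂ^n`. -/
def nsqP {m : ℕ} (ξ : Cn m) : ℝ := nsq1 ξ.1 + ‖ξ.2‖ ^ 2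

/-- `ρ(z,w) = (i/2)(conj w_n - z_n) - ⟨z', w'⟩`. -/
def rhoK {m : ℕ} (z w : Cn m) : ℂ :=
  Complex.I / 2 * ((starRingEnd ℂ) w.2 - z.2) - herm1 z.1 w.1

/-- `ρ(z) = Im z_n - |z'|²`. -/
def rho {m : ℕ} (z : Cn m) : ℝ := z.2.im - nsq1 z.1

/-- The Siegel upper half-space `U ⊂ ℂ^n`. -/
def Siegel (m : ℕ) : Set (Cn m) := {z | nsq1 z.1 < z.2.im}

/-- The open unit ball of `ℂ^n`. -/
def Ball (m : ℕ) : Set (Cn m) := {ξ | nsqP ξ < 1}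

/-- The Cayley transform `Φ : B^n → U`. -/
def cayley {m : ℕ} (ξ : Cn m) : Cn m :=
  ((1 + ξ.2)⁻¹ • ξ.1, Complex.I * ((1 - ξ.2) / (1 + ξ.2)))

/-! The Cayley transform is holomorphic on `1 + z_n ≠ 0`, so its real Jacobian is the norm
`N_{ℂ/ℝ} = |·|²` of its complex Jacobian. In the splitting `ℂⁿ = ℂⁿ⁻¹ × ℂ` the complex
derivative is block upper triangular with diagonal blocks `(1 + ξ_n)⁻¹ • id` and
`-2i (1 + ξ_n)⁻²`, whence `det_ℂ Φ'(ξ) = -2i (1 + ξ_n)^{-(n+1)}`. -/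

namespace LinearMap

variable {R M N : Type*} [CommRing R] [AddCommGroup M] [Module R M] [AddCommGroup N] [Module R N]
  [Module.Free R M] [Module.Finite R M] [Module.Free R N] [Module.Finite R N]

theorem det_coprod_prod_comp_snd (A : Module.End R M) (B : N →ₗ[R] M) (D : Module.End R N) :
    ((A.coprod B).prod (D ∘ₗ snd R M N)).det = A.det * D.det := by
  classical
  let b := Module.Free.chooseBasis R M
  let b' := Module.Free.chooseBasis R N
  have hblocks : toMatrix (b.prod b') (b.prod b') ((A.coprod B).prod (D ∘ₗ snd R M N)) =
      Matrix.fromBlocks (toMatrix b b A) (toMatrix b' b B) 0 (toMatrix b' b' D) := by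
    ext (i | i) (j | j) <;> simp [toMatrix]
  rw [← det_toMatrix (b.prod b'), hblocks, Matrix.det_fromBlocks_zero₂₁, det_toMatrix,
    det_toMatrix]

theorem det_restrictScalars_eq_normSq {E : Type*} [AddCommGroup E] [Module ℂ E] [Module ℝ E]
    [IsScalarTower ℝ ℂ E] [Module.Free ℂ E] (f : E →ₗ[ℂ] E) :
    (f.restrictScalars ℝ).det = Complex.normSq f.det := by
  rw [det_restrictScalars, Algebra.norm_complex_apply]

end LinearMap

theorem one_add_ne_zero_of_norm_lt_one {𝕜 : Type*} [NormedRing 𝕜] [NormOneClass 𝕜] {w : 𝕜}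
    (hw : ‖w‖ < 1) : 1 + w ≠ 0 := by
  rw [add_comm, ← sub_neg_eq_add, sub_ne_zero]
  rintro rfl
  simp at hw

theorem hasDerivAt_one_add_inv {𝕜 : Type*} [NontriviallyNormedField 𝕜] {w : 𝕜} (hw : 1 + w ≠ 0) :
    HasDerivAt (fun w : 𝕜 => (1 + w)⁻¹) (-(1 + w)⁻¹ ^ 2) w := by
  refine (((hasDerivAt_id w).const_add 1).inv hw).congr_deriv ?_
  simp only [id, inv_pow]
  ring

theorem hasDerivAt_cayley_snd {w : ℂ} (hw : 1 + w ≠ 0) :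
    HasDerivAt (fun w : ℂ => I * ((1 - w) / (1 + w))) (-2 * I * (1 + w)⁻¹ ^ 2) w := by
  have h := (((hasDerivAt_id w).const_sub 1).div ((hasDerivAt_id w).const_add 1) hw).const_mul I
  refine h.congr_deriv ?_
  simp only [id]
  field_simp
  ring

theorem norm_snd_lt_one_of_mem_Ball {m : ℕ} {ξ : Cn m} (hξ : ξ ∈ Ball m) : ‖ξ.2‖ < 1 := by
  have h₀ : 0 ≤ nsq1 ξ.1 := Finset.sum_nonneg fun j _ => sq_nonneg _
  have h₁ : nsq1 ξ.1 + ‖ξ.2‖ ^ 2 < 1 := hξ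
  nlinarith [norm_nonneg ξ.2]

open ContinuousLinearMap in
def cayleyDeriv {m : ℕ} (ξ : Cn m) : Cn m →L[ℂ] Cn m :=
  (((1 + ξ.2)⁻¹ • ContinuousLinearMap.id ℂ (Fin m → ℂ)).coprod
      (toSpanSingleton ℂ (-(1 + ξ.2)⁻¹ ^ 2 • ξ.1))).prod
    ((-2 * I * (1 + ξ.2)⁻¹ ^ 2) • ContinuousLinearMap.id ℂ ℂ ∘L snd ℂ (Fin m → ℂ) ℂ)

theorem hasFDerivAt_cayley {m : ℕ} {ξ : Cn m} (hξ : 1 + ξ.2 ≠ 0) :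
    HasFDerivAt cayley (cayleyDeriv ξ) ξ := by
  have hsnd := hasFDerivAt_snd (𝕜 := ℂ) (p := ξ)
  have h₁ := ((hasDerivAt_one_add_inv hξ).comp_hasFDerivAt ξ hsnd).smul
    (hasFDerivAt_fst (𝕜 := ℂ) (p := ξ))
  have h₂ := (hasDerivAt_cayley_snd hξ).comp_hasFDerivAt ξ hsnd
  refine (h₁.prodMk h₂).congr_fderiv ?_
  ext p <;> simp [cayleyDeriv]

theorem det_cayleyDeriv {m : ℕ} (ξ : Cn m) :
    (cayleyDeriv ξ).det = -2 * I * (1 + ξ.2)⁻¹ ^ (m + 2) := by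
  refine (LinearMap.det_coprod_prod_comp_snd ((1 + ξ.2)⁻¹ • LinearMap.id)
    (LinearMap.toSpanSingleton ℂ _ (-(1 + ξ.2)⁻¹ ^ 2 • ξ.1))
    ((-2 * I * (1 + ξ.2)⁻¹ ^ 2) • LinearMap.id)).trans ?_
  rw [LinearMap.det_smul, LinearMap.det_smul, LinearMap.det_id, LinearMap.det_id,
    Module.finrank_fin_fun, Module.finrank_self]
  ring

theorem cayley_jacobian (m : ℕ) (ξ : Cn m) (hξ : ξ ∈ Ball m) :
    DifferentiableAt ℝ (cayley (m := m)) ξ ∧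
      |(fderiv ℝ (cayley (m := m)) ξ).det|
        = 4 / ‖1 + ξ.2‖ ^ (2 * (m + 2)) := by
  have hΦ := (hasFDerivAt_cayley
    (one_add_ne_zero_of_norm_lt_one (norm_snd_lt_one_of_mem_Ball hξ))).restrictScalars ℝ
  refine ⟨hΦ.differentiableAt, ?_⟩
  rw [hΦ.fderiv, ContinuousLinearMap.det, ContinuousLinearMap.coe_restrictScalars,
    LinearMap.det_restrictScalars_eq_normSq, ← ContinuousLinearMap.det, det_cayleyDeriv,
    Complex.normSq_eq_norm_sq, abs_of_nonneg (by positivity)]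
  simp only [norm_mul, norm_neg, norm_pow, norm_inv, Complex.norm_ofNat, norm_I, mul_one]
  ring

end
end

section
/- Let s, t be real numbers such that t ≤ -1 or s - t ≤ n + 1. Then for every z in the Siegel upper half-space U, the integral ∫_U ρ(w)^t / |ρ(z,w)|^s dV(w) diverges (equals +∞). -/
open MeasureTheory Real Complex

noncomputable section

/-!
Write `y = Im w_n`. Since `2 Re⟨z', w'⟩ ≤ |z'|² + |w'|²`, one has `ρ(z) + ρ(w) ≤ 2 |ρ(z,w)|`, while
`2 |ρ(z,w)| ≤ |z_n| + |w_n| + |z'|² + |w'|²`.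

If `t ≤ -1`, the kernel `|ρ(z,w)|` is bounded above and below on the layer `|w'| < 1`,
`0 < Re w_n < 1`, `0 < ρ(w) < 1`; for fixed `w'` the integral in `w_n` is then `≳ ∫₀¹ ρ^t dρ = ∞`.

If `s - t ≤ n + 1`, both `ρ(w)` and `|ρ(z,w)|` are comparable to `y` on the cone `|w'|² < y/2`,
`0 < Re w_n < y`, `y > 1`, so the integrand is `≳ y^(t-s)`. Integrating out `w'` (a ball of volume
`≍ y^(n-1)`) and `Re w_n` leaves `∫₁^∞ y^(t-s+n) dy = ∞`.
-/

open Set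
open scoped ENNReal Pointwise

theorem lintegral_Ioo_zero_one_rpow_eq_top {t : ℝ} (ht : t ≤ -1) :
    ∫⁻ v in Ioo (0 : ℝ) 1, ENNReal.ofReal (v ^ t) = ⊤ := by
  by_contra hfin
  have hint : IntegrableOn (fun v : ℝ => v ^ t) (Ioo 0 1) := by
    refine (lintegral_ofReal_ne_top_iff_integrable (by fun_prop) ?_).1 hfin
    filter_upwards [ae_restrict_mem measurableSet_Ioo] with v hv
    exact Real.rpow_nonneg hv.1.le t
  rw [intervalIntegral.integrableOn_Ioo_rpow_iff one_pos] at hint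
  linarith

theorem lintegral_Ioi_rpow_eq_top {p a : ℝ} (hp : -1 ≤ p) (ha : 0 < a) :
    ∫⁻ v in Ioi a, ENNReal.ofReal (v ^ p) = ⊤ := by
  by_contra hfin
  have hint : IntegrableOn (fun v : ℝ => v ^ p) (Ioi a) := by
    refine (lintegral_ofReal_ne_top_iff_integrable (by fun_prop) ?_).1 hfin
    filter_upwards [ae_restrict_mem measurableSet_Ioi] with v hv
    exact Real.rpow_nonneg (ha.trans hv).le p
  rw [integrableOn_Ioi_rpow_iff ha] at hint
  linarith

section Tonelli
variable {α β : Type*} [MeasurableSpace α] [MeasurableSpace β] {μ : Measure α} {ν : Measure β}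
  [SFinite ν] {S : Set (α × β)} {f : α × β → ℝ≥0∞}

theorem setLIntegral_prod_eq_lintegral_setLIntegral (hS : MeasurableSet S) (hf : Measurable f) :
    ∫⁻ p in S, f p ∂μ.prod ν = ∫⁻ x, ∫⁻ y in Prod.mk x ⁻¹' S, f (x, y) ∂ν ∂μ := by
  rw [← lintegral_indicator hS, lintegral_prod _ (hf.indicator hS).aemeasurable]
  refine lintegral_congr fun x => ?_
  rw [← lintegral_indicator (measurable_prodMk_left hS)]
  rfl

theorem setLIntegral_prod_eq_lintegral_setLIntegral_symm [SFinite μ] (hS : MeasurableSet S)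
    (hf : Measurable f) :
    ∫⁻ p in S, f p ∂μ.prod ν = ∫⁻ y, ∫⁻ x in (·, y) ⁻¹' S, f (x, y) ∂μ ∂ν := by
  rw [← lintegral_indicator hS, lintegral_prod_symm _ (hf.indicator hS).aemeasurable]
  refine lintegral_congr fun y => ?_
  rw [← lintegral_indicator (measurable_prodMk_right hS)]
  rfl

end Tonelli

theorem setLIntegral_complex_eq {S : Set ℂ} (hS : MeasurableSet S) {f : ℂ → ℝ≥0∞}
    (hf : Measurable f) :
    ∫⁻ ζ in S, f ζ = ∫⁻ y : ℝ, ∫⁻ x in {x : ℝ | ⟨x, y⟩ ∈ S}, f ⟨x, y⟩ := by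
  have e := Complex.volume_preserving_equiv_real_prod.symm
  rw [← e.setLIntegral_comp_preimage_emb Complex.measurableEquivRealProd.symm.measurableEmbedding,
    Measure.volume_eq_prod, setLIntegral_prod_eq_lintegral_setLIntegral_symm]
  · rfl
  · exact Complex.measurableEquivRealProd.symm.measurable hS
  · exact hf.comp Complex.measurableEquivRealProd.symm.measurable

theorem setLIntegral_strip_im_sub_rpow_eq_top (u : ℝ) {t : ℝ} (ht : t ≤ -1) :
    ∫⁻ ζ in {ζ : ℂ | ζ.re ∈ Ioo 0 1 ∧ ζ.im - u ∈ Ioo 0 1}, ENNReal.ofReal ((ζ.im - u) ^ t) = ⊤ := by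
  rw [setLIntegral_complex_eq (by measurability) (by fun_prop)]
  refine eq_top_iff.2 (le_trans ?_ (setLIntegral_le_lintegral ((· - u) ⁻¹' Ioo 0 1) _))
  rw [← lintegral_Ioo_zero_one_rpow_eq_top ht, ← (measurePreserving_sub_right volume u)
    |>.setLIntegral_comp_preimage measurableSet_Ioo (by fun_prop)]
  refine (setLIntegral_congr_fun (measurableSet_Ioo.preimage (by fun_prop)) fun y hy => ?_).le
  have hfiber : {x : ℝ | (⟨x, y⟩ : ℂ) ∈ {ζ : ℂ | ζ.re ∈ Ioo 0 1 ∧ ζ.im - u ∈ Ioo 0 1}}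
      = Ioo 0 1 := by
    ext x
    exact and_iff_left hy
  dsimp only
  rw [hfiber, setLIntegral_const, Real.volume_Ioo, sub_zero, ENNReal.ofReal_one, mul_one]

theorem setLIntegral_sector_im_rpow_eq_top {q : ℝ} (hq : -2 ≤ q) :
    ∫⁻ ζ in {ζ : ℂ | ζ.re ∈ Ioo 0 ζ.im ∧ 1 < ζ.im}, ENNReal.ofReal (ζ.im ^ q) = ⊤ := by
  rw [setLIntegral_complex_eq (by measurability) (by fun_prop)]
  refine eq_top_iff.2 (le_trans ?_ (setLIntegral_le_lintegral (Ioi 1) _))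
  rw [← lintegral_Ioi_rpow_eq_top (p := q + 1) (by linarith) one_pos]
  refine (setLIntegral_congr_fun measurableSet_Ioi fun y (hy : 1 < y) => ?_).le
  have hfiber : {x : ℝ | (⟨x, y⟩ : ℂ) ∈ {ζ : ℂ | ζ.re ∈ Ioo 0 ζ.im ∧ 1 < ζ.im}} = Ioo 0 y := by
    ext x
    exact and_iff_left hy
  dsimp only
  rw [hfiber, setLIntegral_const, Real.volume_Ioo, sub_zero, ← ENNReal.ofReal_mul (by positivity),
    Real.rpow_add_one (by positivity)]

theorem rpow_le_max_mul_rpow {a b x y : ℝ} (s : ℝ) (ha : 0 < a) (hy : 0 < y) (hax : a * y ≤ x)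
    (hxb : x ≤ b * y) : x ^ s ≤ max (a ^ s) (b ^ s) * y ^ s := by
  have hb : 0 < b := pos_of_mul_pos_left ((mul_pos ha hy).trans_le (hax.trans hxb)) hy.le
  rw [max_mul_of_nonneg _ _ (Real.rpow_nonneg hy.le s), ← Real.mul_rpow ha.le hy.le,
    ← Real.mul_rpow hb.le hy.le]
  rcases le_or_gt 0 s with hs | hs
  · exact le_max_of_le_right (Real.rpow_le_rpow ((mul_pos ha hy).le.trans hax) hxb hs)
  · exact le_max_of_le_left (Real.rpow_le_rpow_of_nonpos (by positivity) hax hs.le)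

theorem min_mul_rpow_le_rpow {a b x y : ℝ} (s : ℝ) (ha : 0 < a) (hy : 0 < y) (hax : a * y ≤ x)
    (hxb : x ≤ b * y) : min (a ^ s) (b ^ s) * y ^ s ≤ x ^ s := by
  have hb : 0 < b := pos_of_mul_pos_left ((mul_pos ha hy).trans_le (hax.trans hxb)) hy.le
  rw [min_mul_of_nonneg _ _ (Real.rpow_nonneg hy.le s), ← Real.mul_rpow ha.le hy.le,
    ← Real.mul_rpow hb.le hy.le]
  rcases le_or_gt 0 s with hs | hs
  · exact min_le_of_left_le (Real.rpow_le_rpow (by positivity) hax hs)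
  · exact min_le_of_right_le (Real.rpow_le_rpow_of_nonpos ((mul_pos ha hy).trans_le hax) hxb hs.le)

theorem setLIntegral_eq_top_of_subset {α : Type*} [MeasurableSpace α] {μ : Measure α}
    {S T : Set α} {f g : α → ℝ≥0∞} (hST : S ⊆ T) (hS : MeasurableSet S)
    (hgf : ∀ x ∈ S, g x ≤ f x) (hg : ∫⁻ x in S, g x ∂μ = ⊤) : ∫⁻ x in T, f x ∂μ = ⊤ :=
  eq_top_iff.2 (hg ▸ (setLIntegral_mono' hS hgf).trans (lintegral_mono_set hST))

section Siegel

variable {m : ℕ} {z : Cn m}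

theorem nsq1_nonneg (w' : Fin m → ℂ) : 0 ≤ nsq1 w' := by unfold nsq1; positivity

@[fun_prop]
theorem continuous_nsq1 : Continuous (nsq1 (m := m)) := by unfold nsq1; fun_prop

theorem nsq1_smul (c : ℝ) (w' : Fin m → ℂ) : nsq1 (c • w') = c ^ 2 * nsq1 w' := by
  simp only [nsq1, Finset.mul_sum, Pi.smul_apply, Complex.real_smul, norm_mul, Complex.norm_real,
    Real.norm_eq_abs, mul_pow, sq_abs]

theorem norm_herm1_le (z' w' : Fin m → ℂ) : ‖herm1 z' w'‖ ≤ (nsq1 z' + nsq1 w') / 2 := by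
  calc ‖herm1 z' w'‖ ≤ ∑ j, ‖z' j‖ * ‖w' j‖ := by
        simpa only [herm1, norm_mul, Complex.norm_conj] using
          norm_sum_le Finset.univ fun j => z' j * (starRingEnd ℂ) (w' j)
    _ ≤ ∑ j, (‖z' j‖ ^ 2 + ‖w' j‖ ^ 2) / 2 :=
        Finset.sum_le_sum fun j _ => by nlinarith [sq_nonneg (‖z' j‖ - ‖w' j‖)]
    _ = (nsq1 z' + nsq1 w') / 2 := by simp only [nsq1, ← Finset.sum_div, Finset.sum_add_distrib]

theorem re_rhoK (z w : Cn m) :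
    (rhoK z w).re = (z.2.im + w.2.im) / 2 - (herm1 z.1 w.1).re := by
  simp only [rhoK, sub_re, mul_re, div_ofNat_re, I_re, zero_div, conj_re, zero_mul, div_ofNat_im,
    I_im, one_div, sub_im, conj_im, zero_sub, sub_left_inj]
  ring

theorem rho_add_rho_le_two_mul_norm_rhoK (z w : Cn m) : rho z + rho w ≤ 2 * ‖rhoK z w‖ := by
  have hherm := (Complex.re_le_norm (herm1 z.1 w.1)).trans (norm_herm1_le z.1 w.1)
  have hre := Complex.re_le_norm (rhoK z w)
  rw [re_rhoK] at hre
  unfold rho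
  linarith

theorem norm_rhoK_le (z w : Cn m) :
    ‖rhoK z w‖ ≤ (‖z.2‖ + ‖w.2‖ + nsq1 z.1 + nsq1 w.1) / 2 := by
  have hherm := norm_herm1_le z.1 w.1
  calc ‖rhoK z w‖ ≤ ‖Complex.I / 2‖ * (‖(starRingEnd ℂ) w.2‖ + ‖z.2‖) + ‖herm1 z.1 w.1‖ := by
        unfold rhoK
        grw [norm_sub_le, norm_mul, norm_sub_le]
    _ ≤ (‖z.2‖ + ‖w.2‖ + nsq1 z.1 + nsq1 w.1) / 2 := by
        rw [norm_div, Complex.norm_I, Complex.norm_two, Complex.norm_conj]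
        linarith

theorem volume_nsq1_lt (r : ℝ) (hr : 0 < r) :
    volume {w' : Fin m → ℂ | nsq1 w' < r}
      = ENNReal.ofReal (r ^ m) * volume {w' : Fin m → ℂ | nsq1 w' < 1} := by
  have hsqrt : 0 < √r := Real.sqrt_pos.2 hr
  have hscale : {w' : Fin m → ℂ | nsq1 w' < r} = √r • {w' | nsq1 w' < 1} := by
    ext w
    rw [mem_smul_set_iff_inv_smul_mem₀ hsqrt.ne', mem_ofPred_eq, mem_ofPred_eq, nsq1_smul, inv_pow,
      Real.sq_sqrt hr.le, inv_mul_lt_one₀ hr]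
  have hdim : Module.finrank ℝ (Fin m → ℂ) = 2 * m := by
    simp [Module.finrank_pi_fintype, Complex.finrank_real_complex, mul_comm]
  rw [hscale, Measure.addHaar_smul_of_nonneg volume hsqrt.le, hdim, pow_mul, Real.sq_sqrt hr.le]

theorem volume_nsq1_lt_one_pos : 0 < volume {w' : Fin m → ℂ | nsq1 w' < 1} :=
  (isOpen_lt continuous_nsq1 continuous_const).measure_pos volume ⟨0, by simp [nsq1]⟩

@[fun_prop]
theorem continuous_rho : Continuous (rho (m := m)) := by unfold rho; fun_prop

def boundaryLayer (m : ℕ) : Set (Cn m) :=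
  {w | nsq1 w.1 < 1 ∧ w.2.re ∈ Ioo 0 1 ∧ rho w ∈ Ioo 0 1}

def cuspCone (m : ℕ) : Set (Cn m) :=
  {w | nsq1 w.1 < w.2.im / 2 ∧ w.2.re ∈ Ioo 0 w.2.im ∧ 1 < w.2.im}

theorem measurableSet_boundaryLayer : MeasurableSet (boundaryLayer m) := by
  unfold boundaryLayer; measurability

theorem measurableSet_cuspCone : MeasurableSet (cuspCone m) := by
  unfold cuspCone; measurability

theorem boundaryLayer_subset_siegel : boundaryLayer m ⊆ Siegel m :=
  fun _ hw => sub_pos.1 hw.2.2.1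

theorem cuspCone_subset_siegel : cuspCone m ⊆ Siegel m :=
  fun _ hw => hw.1.trans (half_lt_self (zero_lt_one.trans hw.2.2))

theorem setLIntegral_boundaryLayer_rho_rpow_eq_top {t : ℝ} (ht : t ≤ -1) :
    ∫⁻ w in boundaryLayer m, ENNReal.ofReal (rho w ^ t) = ⊤ := by
  rw [Measure.volume_eq_prod,
    setLIntegral_prod_eq_lintegral_setLIntegral measurableSet_boundaryLayer (by fun_prop)]
  refine eq_top_iff.2 (le_trans ?_ (setLIntegral_le_lintegral {w' | nsq1 w' < 1} _))
  have hfiber (w' : Fin m → ℂ) (hw' : w' ∈ {w' : Fin m → ℂ | nsq1 w' < 1}) :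
      ∫⁻ ζ in Prod.mk w' ⁻¹' boundaryLayer m, ENNReal.ofReal (rho (w', ζ) ^ t) = ⊤ := by
    have hset : Prod.mk w' ⁻¹' boundaryLayer m
        = {ζ : ℂ | ζ.re ∈ Ioo 0 1 ∧ ζ.im - nsq1 w' ∈ Ioo 0 1} :=
      ext fun _ => and_iff_right hw'
    exact hset ▸ setLIntegral_strip_im_sub_rpow_eq_top (nsq1 w') ht
  rw [setLIntegral_congr_fun (by measurability) hfiber, setLIntegral_const,
    ENNReal.top_mul volume_nsq1_lt_one_pos.ne']

theorem setLIntegral_cuspCone_im_rpow_eq_top {p : ℝ} (hp : -(m + 2 : ℝ) ≤ p) :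
    ∫⁻ w in cuspCone m, ENNReal.ofReal (w.2.im ^ p) = ⊤ := by
  rw [Measure.volume_eq_prod,
    setLIntegral_prod_eq_lintegral_setLIntegral_symm measurableSet_cuspCone (by fun_prop)]
  set V := volume {w' : Fin m → ℂ | nsq1 w' < 1}
  set sector := {ζ : ℂ | ζ.re ∈ Ioo 0 ζ.im ∧ 1 < ζ.im}
  have hfiber (ζ : ℂ) (hζ : ζ ∈ sector) :
      ∫⁻ w' in (·, ζ) ⁻¹' cuspCone m, ENNReal.ofReal (ζ.im ^ p)
        = ENNReal.ofReal (2⁻¹ ^ m) * V * ENNReal.ofReal (ζ.im ^ (p + m)) := by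
    have hy : 0 < ζ.im := zero_lt_one.trans hζ.2
    have hset : (·, ζ) ⁻¹' cuspCone m = {w' | nsq1 w' < ζ.im / 2} :=
      ext fun _ => and_iff_left hζ
    have hpow : ζ.im ^ p * (ζ.im / 2) ^ m = 2⁻¹ ^ m * ζ.im ^ (p + m) := by
      rw [Real.rpow_add hy, Real.rpow_natCast, div_pow, inv_pow]
      ring
    rw [hset, setLIntegral_const, volume_nsq1_lt _ (half_pos hy), ← mul_assoc,
      ← ENNReal.ofReal_mul (by positivity), hpow, ENNReal.ofReal_mul (by positivity)]
    ring
  refine eq_top_iff.2 (le_trans ?_ (setLIntegral_le_lintegral sector _))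
  rw [setLIntegral_congr_fun (by measurability) hfiber, lintegral_const_mul _ (by fun_prop),
    setLIntegral_sector_im_rpow_eq_top (by linarith), ENNReal.mul_top]
  exact mul_ne_zero (by simp) volume_nsq1_lt_one_pos.ne'

theorem setLIntegral_siegel_eq_top_of_le_neg_one (hz : z ∈ Siegel m) (s : ℝ) {t : ℝ}
    (ht : t ≤ -1) : ∫⁻ w in Siegel m, ENNReal.ofReal (rho w ^ t / ‖rhoK z w‖ ^ s) = ⊤ := by
  have hρz : 0 < rho z := sub_pos.2 hz
  set C := (‖z.2‖ + 3 + nsq1 z.1 + 1) / 2 with hC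
  set D := max ((rho z / 2) ^ s) (C ^ s)
  have hD : 0 < D := lt_max_of_lt_left (by positivity)
  have hbound (w : Cn m) (hw : w ∈ boundaryLayer m) : ‖rhoK z w‖ ^ s ≤ D := by
    obtain ⟨hw', ⟨hx₀, hx₁⟩, hρ₀, hρ₁⟩ := hw
    have hwn : ‖w.2‖ ≤ 3 := by
      refine (Complex.norm_le_abs_re_add_abs_im _).trans ?_
      rw [abs_of_pos hx₀, abs_of_pos (hρ₀.trans_le (sub_le_self _ (nsq1_nonneg _)))]
      unfold rho at hρ₁
      linarith
    have h := rpow_le_max_mul_rpow (x := ‖rhoK z w‖) (b := C) s (half_pos hρz) one_pos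
      (by linarith [rho_add_rho_le_two_mul_norm_rhoK z w]) (by linarith [norm_rhoK_le z w, hC])
    rwa [Real.one_rpow, mul_one] at h
  refine setLIntegral_eq_top_of_subset boundaryLayer_subset_siegel measurableSet_boundaryLayer
    (g := fun w => ENNReal.ofReal D⁻¹ * ENNReal.ofReal (rho w ^ t)) (fun w hw => ?_) ?_
  · have hρw : 0 < rho w := hw.2.2.1
    rw [← ENNReal.ofReal_mul (by positivity), inv_mul_eq_div]
    exact ENNReal.ofReal_le_ofReal (div_le_div_of_nonneg_left (by positivity)
      (Real.rpow_pos_of_pos (by linarith [rho_add_rho_le_two_mul_norm_rhoK z w]) s) (hbound w hw))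
  · rw [lintegral_const_mul _ (by fun_prop), setLIntegral_boundaryLayer_rho_rpow_eq_top ht,
      ENNReal.mul_top (by simpa using hD)]

theorem setLIntegral_siegel_eq_top_of_sub_le (hz : z ∈ Siegel m) {s t : ℝ}
    (hst : s - t ≤ (m : ℝ) + 1 + 1) :
    ∫⁻ w in Siegel m, ENNReal.ofReal (rho w ^ t / ‖rhoK z w‖ ^ s) = ⊤ := by
  have hρz : 0 < rho z := sub_pos.2 hz
  set K := 2 + ‖z.2‖ + nsq1 z.1 with hK
  have hzn : 0 ≤ ‖z.2‖ + nsq1 z.1 := add_nonneg (norm_nonneg _) (nsq1_nonneg _)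
  have hK₀ : 0 < K := by linarith
  set c := min (2⁻¹ ^ t) (1 ^ t) / max (4⁻¹ ^ s) (K ^ s)
  have hc : 0 < c := by positivity
  have hbound (w : Cn m) (hw : w ∈ cuspCone m) :
      c * w.2.im ^ (t - s) ≤ rho w ^ t / ‖rhoK z w‖ ^ s := by
    obtain ⟨hw', ⟨hx₀, hxy⟩, hy₁⟩ := hw
    set y := w.2.im
    have hy : 0 < y := zero_lt_one.trans hy₁
    have hρ₁ : 2⁻¹ * y ≤ rho w := by unfold rho; linarith
    have hρ₂ : rho w ≤ 1 * y := by unfold rho; linarith [nsq1_nonneg w.1]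
    have hwn : ‖w.2‖ ≤ 2 * y := (Complex.norm_le_abs_re_add_abs_im _).trans
      (by rw [abs_of_pos hx₀, abs_of_pos hy]; linarith)
    have hKy : ‖z.2‖ + nsq1 z.1 ≤ (‖z.2‖ + nsq1 z.1) * y :=
      le_mul_of_one_le_right hzn hy₁.le
    have hn₁ : 4⁻¹ * y ≤ ‖rhoK z w‖ := by linarith [rho_add_rho_le_two_mul_norm_rhoK z w]
    have hn₂ : ‖rhoK z w‖ ≤ K * y := by
      rw [hK]; linarith [norm_rhoK_le z w]
    calc c * y ^ (t - s)
        = min (2⁻¹ ^ t) (1 ^ t) * y ^ t / (max (4⁻¹ ^ s) (K ^ s) * y ^ s) := by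
          rw [Real.rpow_sub hy, div_mul_div_comm]
      _ ≤ rho w ^ t / ‖rhoK z w‖ ^ s :=
          div_le_div₀ (Real.rpow_nonneg (by linarith) t)
            (min_mul_rpow_le_rpow t (by norm_num) hy hρ₁ hρ₂)
            (Real.rpow_pos_of_pos (by linarith) s) (rpow_le_max_mul_rpow s (by norm_num) hy hn₁ hn₂)
  refine setLIntegral_eq_top_of_subset cuspCone_subset_siegel measurableSet_cuspCone
    (g := fun w => ENNReal.ofReal c * ENNReal.ofReal (w.2.im ^ (t - s))) (fun w hw => ?_) ?_
  · rw [← ENNReal.ofReal_mul hc.le]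
    exact ENNReal.ofReal_le_ofReal (hbound w hw)
  · rw [lintegral_const_mul _ (by fun_prop), setLIntegral_cuspCone_im_rpow_eq_top (by linarith),
      ENNReal.mul_top (by simpa using hc)]

end Siegel

theorem key_lemma_diverge (m : ℕ) (s t : ℝ) (h : t ≤ -1 ∨ s - t ≤ (m : ℝ) + 1 + 1)
    (z : Cn m) (hz : z ∈ Siegel m) :
    ∫⁻ w in Siegel m, ENNReal.ofReal (rho w ^ t / ‖rhoK z w‖ ^ s) = ⊤ := by
  rcases h with ht | hst
  · exact setLIntegral_siegel_eq_top_of_le_neg_one hz s ht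
  · exact setLIntegral_siegel_eq_top_of_sub_le hz hst
end
end

section
/- (Schur's test) Let (X, μ) be a σ-finite measure space, Q(x,y) a nonnegative measurable function on X × X, and T the integral operator Tf(x) = ∫_X Q(x,y) f(y) dμ(y). Let 1 < p < ∞ and q = p/(p-1). If there exist a constant C > 0 and a positive measurable function g on X such that ∫_X Q(x,y) g(y)^q dμ(y) ≤ C g(x)^q for a.e. x, and ∫_X Q(x,y) g(x)^p dμ(x) ≤ C g(y)^p for a.e. y, then T is bounded on L^p(X, μ) with operator norm at most C. -/
open MeasureTheory
open scoped ENNReal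

/-!
Write `Q |f| = (Q^{1/p} |f| / g) (Q^{1/q} g)`. Hölder's inequality in `y` together with the first
hypothesis bounds `(T|f|(x))^p` by `C^{p-1} g(x)^p ∫ Q(x,y) |f(y)|^p / g(y)^p dμ(y)`; integrating
in `x`, Tonelli and the second hypothesis turn the right-hand side into `C^p ‖f‖_p^p`.
Working with `ℝ≥0∞`-valued kernels and functions, no integrability has to be checked.
-/

namespace ENNReal

variable {α : Type*} [MeasurableSpace α] {p q : ℝ}

theorem rpow_lintegral_le_mul_lintegral_div_rpow {ν : Measure α} (hpq : p.HolderConjugate q)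
    {F G : α → ℝ≥0∞} (hF : AEMeasurable F ν) (hG : AEMeasurable G ν) (hG0 : ∀ y, G y ≠ 0)
    (hGtop : ∀ y, G y ≠ ∞) :
    (∫⁻ y, F y ∂ν) ^ p ≤ (∫⁻ y, G y ^ q ∂ν) ^ (p - 1) * ∫⁻ y, (F y / G y) ^ p ∂ν := by
  have hF_eq : F / G * G = F := funext fun y => ENNReal.div_mul_cancel (hG0 y) (hGtop y)
  have holder := lintegral_mul_le_Lp_mul_Lq ν hpq (hF.div hG) hG
  rw [hF_eq] at holder
  calc (∫⁻ y, F y ∂ν) ^ p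
      ≤ ((∫⁻ y, (F y / G y) ^ p ∂ν) ^ (1 / p) * (∫⁻ y, G y ^ q ∂ν) ^ (1 / q)) ^ p :=
        rpow_le_rpow holder hpq.nonneg
    _ = (∫⁻ y, G y ^ q ∂ν) ^ (p - 1) * ∫⁻ y, (F y / G y) ^ p ∂ν := by
        rw [mul_rpow_of_nonneg _ _ hpq.nonneg, ← rpow_mul, ← rpow_mul,
          one_div_mul_cancel hpq.ne_zero, rpow_one, one_div_mul_eq_div,
          hpq.div_conj_eq_sub_one, mul_comm]

theorem rpow_lintegral_mul_le {ν : Measure α} (hpq : p.HolderConjugate q) {K F G : α → ℝ≥0∞}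
    (hK : Measurable K) (hF : Measurable F) (hG : Measurable G) (hG0 : ∀ y, G y ≠ 0)
    (hGtop : ∀ y, G y ≠ ∞) :
    (∫⁻ y, K y * F y ∂ν) ^ p
      ≤ (∫⁻ y, K y * G y ^ q ∂ν) ^ (p - 1) * ∫⁻ y, K y * (F y / G y) ^ p ∂ν := by
  have h := rpow_lintegral_le_mul_lintegral_div_rpow (ν := ν.withDensity K) hpq hF.aemeasurable
    hG.aemeasurable hG0 hGtop
  rwa [lintegral_withDensity_eq_lintegral_mul ν hK hF,
    lintegral_withDensity_eq_lintegral_mul ν hK (g := fun y => G y ^ q) (by fun_prop),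
    lintegral_withDensity_eq_lintegral_mul ν hK (g := fun y => (F y / G y) ^ p) (by fun_prop)] at h

section Kernel

variable {μ : Measure α} [SFinite μ] {K : α → α → ℝ≥0∞} {F G : α → ℝ≥0∞} {A : ℝ≥0∞}

theorem lintegral_rpow_mul_lintegral_div_rpow_le (hp : 0 ≤ p) (hK : Measurable (Function.uncurry K))
    (hF : Measurable F) (hG : Measurable G) (hG0 : ∀ y, G y ≠ 0) (hGtop : ∀ y, G y ≠ ∞)
    (h2 : ∀ᵐ y ∂μ, ∫⁻ x, K x y * G x ^ p ∂μ ≤ A * G y ^ p) :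
    ∫⁻ x, G x ^ p * ∫⁻ y, K x y * (F y / G y) ^ p ∂μ ∂μ ≤ A * ∫⁻ y, F y ^ p ∂μ := by
  calc ∫⁻ x, G x ^ p * ∫⁻ y, K x y * (F y / G y) ^ p ∂μ ∂μ
      = ∫⁻ x, ∫⁻ y, G x ^ p * (K x y * (F y / G y) ^ p) ∂μ ∂μ :=
        lintegral_congr fun x => (lintegral_const_mul _ (by fun_prop)).symm
    _ = ∫⁻ y, ∫⁻ x, G x ^ p * (K x y * (F y / G y) ^ p) ∂μ ∂μ :=
        lintegral_lintegral_swap (by fun_prop)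
    _ = ∫⁻ y, (F y / G y) ^ p * ∫⁻ x, K x y * G x ^ p ∂μ ∂μ := by
        refine lintegral_congr fun y => ?_
        rw [← lintegral_const_mul _ (by fun_prop)]
        exact lintegral_congr fun x => by ring
    _ ≤ ∫⁻ y, (F y / G y) ^ p * (A * G y ^ p) ∂μ :=
        lintegral_mono_ae (h2.mono fun y hy => mul_le_mul_right hy _)
    _ = A * ∫⁻ y, F y ^ p ∂μ := by
        rw [← lintegral_const_mul _ (by fun_prop)]
        refine lintegral_congr fun y => ?_
        rw [div_rpow_of_nonneg _ _ hp, mul_left_comm,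
          ENNReal.div_mul_cancel (rpow_pos (pos_iff_ne_zero.2 (hG0 y)) (hGtop y)).ne'
            (rpow_ne_top_of_ne_zero (hG0 y) (hGtop y))]

theorem lintegral_rpow_lintegral_mul_le_of_schur (hpq : p.HolderConjugate q)
    (hK : Measurable (Function.uncurry K)) (hF : Measurable F) (hG : Measurable G)
    (hG0 : ∀ y, G y ≠ 0) (hGtop : ∀ y, G y ≠ ∞)
    (h1 : ∀ᵐ x ∂μ, ∫⁻ y, K x y * G y ^ q ∂μ ≤ A * G x ^ q)
    (h2 : ∀ᵐ y ∂μ, ∫⁻ x, K x y * G x ^ p ∂μ ≤ A * G y ^ p) :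
    ∫⁻ x, (∫⁻ y, K x y * F y ∂μ) ^ p ∂μ ≤ A ^ p * ∫⁻ y, F y ^ p ∂μ := by
  have hp1 : 0 ≤ p - 1 := sub_nonneg.2 hpq.lt.le
  have hpointwise : ∀ᵐ x ∂μ, (∫⁻ y, K x y * F y ∂μ) ^ p
      ≤ A ^ (p - 1) * (G x ^ p * ∫⁻ y, K x y * (F y / G y) ^ p ∂μ) := by
    filter_upwards [h1] with x hx
    calc (∫⁻ y, K x y * F y ∂μ) ^ p
        ≤ (∫⁻ y, K x y * G y ^ q ∂μ) ^ (p - 1) * ∫⁻ y, K x y * (F y / G y) ^ p ∂μ :=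
          rpow_lintegral_mul_le hpq (hK.comp measurable_prodMk_left) hF hG hG0 hGtop
      _ ≤ (A * G x ^ q) ^ (p - 1) * ∫⁻ y, K x y * (F y / G y) ^ p ∂μ := by gcongr
      _ = A ^ (p - 1) * (G x ^ p * ∫⁻ y, K x y * (F y / G y) ^ p ∂μ) := by
          rw [mul_rpow_of_nonneg _ _ hp1, ← rpow_mul, mul_comm q, hpq.sub_one_mul_conj, mul_assoc]
  calc ∫⁻ x, (∫⁻ y, K x y * F y ∂μ) ^ p ∂μ
      ≤ ∫⁻ x, A ^ (p - 1) * (G x ^ p * ∫⁻ y, K x y * (F y / G y) ^ p ∂μ) ∂μ :=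
        lintegral_mono_ae hpointwise
    _ = A ^ (p - 1) * ∫⁻ x, G x ^ p * ∫⁻ y, K x y * (F y / G y) ^ p ∂μ ∂μ := by
        refine lintegral_const_mul _ ((hG.pow_const p).mul ?_)
        exact Measurable.lintegral_prod_right' (f := fun z => K z.1 z.2 * (F z.2 / G z.2) ^ p)
          (by fun_prop)
    _ ≤ A ^ (p - 1) * (A * ∫⁻ y, F y ^ p ∂μ) := by
        gcongr
        exact lintegral_rpow_mul_lintegral_div_rpow_le hpq.nonneg hK hF hG hG0 hGtop h2
    _ = A ^ p * ∫⁻ y, F y ^ p ∂μ := by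
        have hA : A ^ p = A ^ (p - 1) * A := by
          conv_lhs => rw [← sub_add_cancel p 1]
          rw [rpow_add_of_nonneg _ _ hp1 zero_le_one, rpow_one]
        rw [← mul_assoc, hA]

theorem eLpNorm_lintegral_mul_le_of_schur (hpq : p.HolderConjugate q)
    (hK : Measurable (Function.uncurry K)) (hF : AEMeasurable F μ) (hG : Measurable G)
    (hG0 : ∀ y, G y ≠ 0) (hGtop : ∀ y, G y ≠ ∞)
    (h1 : ∀ᵐ x ∂μ, ∫⁻ y, K x y * G y ^ q ∂μ ≤ A * G x ^ q)
    (h2 : ∀ᵐ y ∂μ, ∫⁻ x, K x y * G x ^ p ∂μ ≤ A * G y ^ p) :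
    eLpNorm (fun x => ∫⁻ y, K x y * F y ∂μ) (.ofReal p) μ ≤ A * eLpNorm F (.ofReal p) μ := by
  have hp := hpq.pos
  have hp0 : ENNReal.ofReal p ≠ 0 := by simpa using hp
  have hT : (fun x => ∫⁻ y, K x y * F y ∂μ) = fun x => ∫⁻ y, K x y * hF.mk F y ∂μ :=
    funext fun x => lintegral_congr_ae (hF.ae_eq_mk.mono fun y hy => congrArg (K x y * ·) hy)
  rw [hT, eLpNorm_congr_ae hF.ae_eq_mk, eLpNorm_eq_lintegral_rpow_enorm_toReal hp0 ofReal_ne_top,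
    eLpNorm_eq_lintegral_rpow_enorm_toReal hp0 ofReal_ne_top, toReal_ofReal hp.le]
  simp only [enorm_eq_self]
  calc (∫⁻ x, (∫⁻ y, K x y * hF.mk F y ∂μ) ^ p ∂μ) ^ (1 / p)
      ≤ (A ^ p * ∫⁻ y, hF.mk F y ^ p ∂μ) ^ (1 / p) :=
        rpow_le_rpow (lintegral_rpow_lintegral_mul_le_of_schur hpq hK hF.measurable_mk hG hG0
          hGtop h1 h2) (by positivity)
    _ = A * (∫⁻ y, hF.mk F y ^ p ∂μ) ^ (1 / p) := by
        rw [mul_rpow_of_nonneg _ _ (by positivity), ← rpow_mul, mul_one_div_cancel hp.ne',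
          rpow_one]

end Kernel

end ENNReal

theorem schur_test_general {X : Type*} [MeasurableSpace X] (μ : Measure X) [SigmaFinite μ]
    (Q : X → X → ℝ) (hQm : Measurable (Function.uncurry Q)) (hQ0 : ∀ x y, 0 ≤ Q x y)
    (p q : ℝ) (hp : 1 < p) (hq : q = p / (p - 1)) (C : ℝ)
    (g : X → ℝ) (hgm : Measurable g) (hg0 : ∀ x, 0 < g x)
    (h1 : ∀ᵐ x ∂μ, ∫⁻ y, ENNReal.ofReal (Q x y * g y ^ q) ∂μ ≤ ENNReal.ofReal (C * g x ^ q))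
    (h2 : ∀ᵐ y ∂μ, ∫⁻ x, ENNReal.ofReal (Q x y * g x ^ p) ∂μ ≤ ENNReal.ofReal (C * g y ^ p)) :
    ∀ f : X → ℝ, MemLp f (ENNReal.ofReal p) μ →
      MemLp (fun x => ∫ y, Q x y * f y ∂μ) (ENNReal.ofReal p) μ ∧
        eLpNorm (fun x => ∫ y, Q x y * f y ∂μ) (ENNReal.ofReal p) μ
          ≤ ENNReal.ofReal C * eLpNorm f (ENNReal.ofReal p) μ := by
  intro f hf
  have hpq : p.HolderConjugate q := (Real.holderConjugate_iff_eq_conjExponent hp).2 hq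
  have hofReal (a r : ℝ) (x : X) :
      ENNReal.ofReal (a * g x ^ r) = ENNReal.ofReal a * ENNReal.ofReal (g x) ^ r := by
    rw [ENNReal.ofReal_mul' (Real.rpow_nonneg (hg0 x).le r), ENNReal.ofReal_rpow_of_pos (hg0 x)]
  have hbound : eLpNorm (fun x => ∫ y, Q x y * f y ∂μ) (ENNReal.ofReal p) μ
      ≤ ENNReal.ofReal C * eLpNorm f (ENNReal.ofReal p) μ := calc
    _ ≤ eLpNorm (fun x => ∫⁻ y, ENNReal.ofReal (Q x y) * ‖f y‖ₑ ∂μ) (ENNReal.ofReal p) μ :=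
        eLpNorm_mono_enorm fun x => by
          simpa only [enorm_mul, Real.enorm_eq_ofReal (hQ0 x _), enorm_eq_self] using
            enorm_integral_le_lintegral_enorm (fun y => Q x y * f y)
    _ ≤ ENNReal.ofReal C * eLpNorm (fun y => ‖f y‖ₑ) (ENNReal.ofReal p) μ :=
        ENNReal.eLpNorm_lintegral_mul_le_of_schur hpq hQm.ennreal_ofReal hf.1.enorm
          hgm.ennreal_ofReal (fun y => by simpa using hg0 y) (fun _ => ENNReal.ofReal_ne_top)
          (by simpa only [hofReal] using h1) (by simpa only [hofReal] using h2)
    _ = ENNReal.ofReal C * eLpNorm f (ENNReal.ofReal p) μ := by rw [eLpNorm_enorm]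
  have hTm : AEStronglyMeasurable (fun x => ∫ y, Q x y * f y ∂μ) μ :=
    (hQm.aestronglyMeasurable.mul hf.1.comp_snd).integral_prod_right'
  exact ⟨⟨hTm, hbound.trans_lt (ENNReal.mul_lt_top ENNReal.ofReal_lt_top hf.2)⟩, hbound⟩

theorem schur_test {X : Type*} [MeasurableSpace X] (μ : Measure X) [SigmaFinite μ]
    (Q : X → X → ℝ) (hQm : Measurable (Function.uncurry Q)) (hQ0 : ∀ x y, 0 ≤ Q x y)
    (p q : ℝ) (hp : 1 < p) (hq : q = p / (p - 1)) (C : ℝ) (hC : 0 < C)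
    (g : X → ℝ) (hgm : Measurable g) (hg0 : ∀ x, 0 < g x)
    (h1 : ∀ᵐ x ∂μ, ∫⁻ y, ENNReal.ofReal (Q x y * g y ^ q) ∂μ ≤ ENNReal.ofReal (C * g x ^ q))
    (h2 : ∀ᵐ y ∂μ, ∫⁻ x, ENNReal.ofReal (Q x y * g x ^ p) ∂μ ≤ ENNReal.ofReal (C * g y ^ p)) :
    ∀ f : X → ℝ, MemLp f (ENNReal.ofReal p) μ →
      MemLp (fun x => ∫ y, Q x y * f y ∂μ) (ENNReal.ofReal p) μ ∧
        eLpNorm (fun x => ∫ y, Q x y * f y ∂μ) (ENNReal.ofReal p) μ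
          ≤ ENNReal.ofReal C * eLpNorm f (ENNReal.ofReal p) μ :=
  schur_test_general μ Q hQm hQ0 p q hp hq C g hgm hg0 h1 h2
end
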